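/- Let K be a compact metric space, and let u, v : K → ℝ be upper and lower semicontinuous respectively, with u − v bounded above. For α > 0, let (x_α, y_α) ∈ K × K be a maximum point of Φ_α(x,y) = u(x) − v(y) − (α/2)d²(x,y), and set m_α = Φ_α(x_α, y_α). Suppose there exists z with u(z) − v(z) = δ > 0 (so m_α ≥ δ for all α). Then along a subsequence α → ∞: (i) d(x_α, y_α) → 0, so the limit points of (x_α) and (y_α) coincide; and (ii) α d²(x_α, y_α) → 0, and m_α → max_K (u − v). -/
import Mathlib


open Filter Topology

/-- doubling-of-variables penalization, Lemma 3.2 of the paper.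
On a compact metric space `K`, with `u` u.s.c., `v` l.s.c., `u - v` bounded above,
`(x_α, y_α)` a maximum point of `Φ_α(x,y) = u(x) - v(y) - (α/2) d(x,y)²`, and a point `z`
with `u(z) - v(z) = δ > 0`, then along a subsequence `α → ∞`:
`d(x_α, y_α) → 0`, `α d(x_α,y_α)² → 0`, and `m_α → sup_K (u - v)`. -/
theorem doubling_penalization
    {K : Type*} [MetricSpace K] [CompactSpace K] [Nonempty K]
    (u v : K → ℝ) (hu : UpperSemicontinuous u) (hv : LowerSemicontinuous v)
    (hb : BddAbove (Set.range fun k => u k - v k))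
    (x y : ℝ → K)
    (hmax : ∀ α > (0:ℝ), ∀ q : K × K,
      u q.1 - v q.2 - α / 2 * dist q.1 q.2 ^ 2
        ≤ u (x α) - v (y α) - α / 2 * dist (x α) (y α) ^ 2)
    (z : K) (δ : ℝ) (hδ : 0 < δ) (hz : u z - v z = δ) :
    ∃ a : ℕ → ℝ, StrictMono a ∧ Tendsto a atTop atTop ∧
      Tendsto (fun n => dist (x (a n)) (y (a n))) atTop (𝓝 0) ∧
      Tendsto (fun n => a n * dist (x (a n)) (y (a n)) ^ 2) atTop (𝓝 0) ∧
      Tendsto (fun n => u (x (a n)) - v (y (a n)) - a n / 2 * dist (x (a n)) (y (a n)) ^ 2)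
        atTop (𝓝 (⨆ k : K, (u k - v k))) := by
  set M : ℝ := ⨆ k : K, (u k - v k) with hMdef
  set m : ℝ → ℝ := fun α => u (x α) - v (y α) - α / 2 * dist (x α) (y α) ^ 2 with hmdef
  -- M ≤ m α for α > 0
  have hMm : ∀ α : ℝ, 0 < α → M ≤ m α := by
    intro α hα
    refine ciSup_le fun k => ?_
    have := hmax α hα (k, k)
    simpa [dist_self] using this
  -- m is antitone on positives
  have hmono : ∀ α β : ℝ, 0 < α → α ≤ β → m β ≤ m α := by
    intro α β hα hαβ
    have hβ : 0 < β := lt_of_lt_of_le hα hαβ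
    have h1 := hmax α hα (x β, y β)
    have h2 : α / 2 * dist (x β) (y β) ^ 2 ≤ β / 2 * dist (x β) (y β) ^ 2 := by
      apply mul_le_mul_of_nonneg_right (by linarith) (by positivity)
    simp only [hmdef]
    calc u (x β) - v (y β) - β / 2 * dist (x β) (y β) ^ 2
        ≤ u (x β) - v (y β) - α / 2 * dist (x β) (y β) ^ 2 := by linarith
      _ ≤ u (x α) - v (y α) - α / 2 * dist (x α) (y α) ^ 2 := h1
  -- the sequence of parameters
  set a : ℕ → ℝ := fun n => (2:ℝ) ^ (n + 1) with hadef
  have hapos : ∀ n : ℕ, (0:ℝ) < (2:ℝ) ^ n := fun n => by positivity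
  have haSM : StrictMono a := fun n k h =>
    pow_lt_pow_right₀ one_lt_two (by omega)
  have haT : Tendsto a atTop atTop :=
    (tendsto_pow_atTop_atTop_of_one_lt (one_lt_two)).comp (tendsto_add_atTop_nat 1)
  set c : ℕ → ℝ := fun n => m ((2:ℝ) ^ n) with hcdef
  have hcanti : Antitone c := by
    intro n k h
    exact hmono _ _ (hapos n) (pow_le_pow_right₀ one_le_two h)
  have hcbdd : BddBelow (Set.range c) := ⟨M, by rintro _ ⟨n, rfl⟩; exact hMm _ (hapos n)⟩
  set L : ℝ := ⨅ n, c n with hLdef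
  have hcL : Tendsto c atTop (𝓝 L) := tendsto_atTop_ciInf hcanti hcbdd
  have hcL' : Tendsto (fun n => c (n + 1)) atTop (𝓝 L) :=
    hcL.comp (tendsto_add_atTop_nat 1)
  -- key inequality: a n * d² ≤ 4 * (c n - c (n+1))
  have hkey : ∀ n : ℕ, a n * dist (x (a n)) (y (a n)) ^ 2 ≤ 4 * (c n - c (n + 1)) := by
    intro n
    have h := hmax ((2:ℝ) ^ n) (hapos n) (x (a n), y (a n))
    have h2 : ((2:ℝ) ^ (n+1)) = 2 * (2:ℝ) ^ n := by ring
    simp only [hcdef, hmdef, hadef] at *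
    nlinarith [hapos n, sq_nonneg (dist (x ((2:ℝ)^(n+1))) (y ((2:ℝ)^(n+1))))]
  have hnn : ∀ n : ℕ, 0 ≤ a n * dist (x (a n)) (y (a n)) ^ 2 := fun n => by positivity
  have hαd2 : Tendsto (fun n => a n * dist (x (a n)) (y (a n)) ^ 2) atTop (𝓝 0) := by
    refine squeeze_zero hnn hkey ?_
    have : Tendsto (fun n => 4 * (c n - c (n + 1))) atTop (𝓝 (4 * (L - L))) :=
      (hcL.sub hcL').const_mul 4
    simpa using this
  have hd2 : Tendsto (fun n => dist (x (a n)) (y (a n)) ^ 2) atTop (𝓝 0) := by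
    refine squeeze_zero (fun n => by positivity) (fun n => ?_) hαd2
    have h1 : (1:ℝ) ≤ a n := one_le_pow₀ one_le_two
    nlinarith [sq_nonneg (dist (x (a n)) (y (a n)))]
  have hd : Tendsto (fun n => dist (x (a n)) (y (a n))) atTop (𝓝 0) := by
    have := (Real.continuous_sqrt.tendsto 0).comp hd2
    simp only [Function.comp_def, Real.sqrt_zero] at this
    have heq : ∀ n, Real.sqrt (dist (x (a n)) (y (a n)) ^ 2) = dist (x (a n)) (y (a n)) :=
      fun n => Real.sqrt_sq dist_nonneg
    simpa [heq] using this
  -- m (a n) = c (n+1) → L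
  have hmL : Tendsto (fun n => m (a n)) atTop (𝓝 L) := hcL'
  -- u(x)-v(y) → L
  have hUV : Tendsto (fun n => u (x (a n)) - v (y (a n))) atTop (𝓝 L) := by
    have h1 : Tendsto (fun n => m (a n) + (1/2) * (a n * dist (x (a n)) (y (a n)) ^ 2))
        atTop (𝓝 (L + (1/2) * 0)) := hmL.add (hαd2.const_mul _)
    rw [mul_zero, add_zero] at h1
    exact h1.congr fun n => by simp only [hmdef]; ring
  -- L = M
  have hML : M ≤ L := le_ciInf fun n => hMm _ (hapos n)
  have hLM : L ≤ M := by
    obtain ⟨p, -, φ, hφ, hxp⟩ := isCompact_univ.tendsto_subseq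
      (x := fun n => x (a n)) (fun n => Set.mem_univ _)
    simp only [Function.comp_def] at hxp
    have hdφ : Tendsto (fun n => dist (x (a (φ n))) (y (a (φ n)))) atTop (𝓝 0) :=
      hd.comp hφ.tendsto_atTop
    have hyp : Tendsto (fun n => y (a (φ n))) atTop (𝓝 p) := by
      rw [tendsto_iff_dist_tendsto_zero]
      refine squeeze_zero (g := fun n => dist (x (a (φ n))) (y (a (φ n))) + dist (x (a (φ n))) p)
        (fun n => dist_nonneg) (fun n => dist_triangle_left _ _ _) ?_
      simpa using hdφ.add ((tendsto_iff_dist_tendsto_zero.mp hxp))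
    refine le_of_forall_pos_le_add fun ε hε => ?_
    have hu' : ∀ᶠ n in atTop, u (x (a (φ n))) < u p + ε / 2 :=
      hxp.eventually (hu p (u p + ε / 2) (by linarith))
    have hv' : ∀ᶠ n in atTop, v p - ε / 2 < v (y (a (φ n))) :=
      hyp.eventually (hv p (v p - ε / 2) (by linarith))
    have hUVφ : Tendsto (fun n => u (x (a (φ n))) - v (y (a (φ n)))) atTop (𝓝 L) :=
      hUV.comp hφ.tendsto_atTop
    refine le_of_tendsto hUVφ ?_
    filter_upwards [hu', hv'] with n h1 h2
    have hup : u p - v p ≤ M := le_ciSup hb p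
    linarith
  have hLMeq : L = M := le_antisymm hLM hML
  exact ⟨a, haSM, haT, hd, hαd2, by rw [← hLMeq]; exact hmL⟩
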